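/- arXiv:1307.0278 — 8 statements merged into one kernel-verified Lean document; each statement's English description precedes it below -/
import Mathlib

section
/- Let G be a graph and x a vertex of G of degree at least 2, not contained in any triangle. Partition the neighborhood N(x) into two nonempty parts A and B. Form a graph G' by deleting x, adding four new vertices y1, y2, y3, y4, adding all edges (y1,a) for a in A and (y4,b) for b in B, and adding the edges (y1,y2), (y1,y3), (y2,y3), (y2,y4), (y3,y4). Then G is properly 3-colorable if and only if G' is properly 3-colorable. -/
open SimpleGraph

lemma fin3_aux (a b d e : Fin 3) (h1 : a ≠ b) (h2 : a ≠ d) (h3 : b ≠ d)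
    (h4 : b ≠ e) (h5 : d ≠ e) : e = a := by
  fin_cases a <;> fin_cases b <;> fin_cases d <;> fin_cases e <;> simp_all

/-- The diamond implantation preserves 3-colorability.  `G'` is built on the
vertex type `{v // v ≠ x} ⊕ Fin 4`, where `Fin 4` holds the new vertices
`y₁ = 0, y₂ = 1, y₃ = 2, y₄ = 3`. -/
theorem diamond_implantation_three_colorable {V : Type*} (G : SimpleGraph V) (x : V)
    (hdeg : ∃ a b : V, a ≠ b ∧ G.Adj x a ∧ G.Adj x b)
    (htri : ∀ a b : V, G.Adj x a → G.Adj x b → ¬ G.Adj a b)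
    (A B : Set V) (hA : A.Nonempty) (hB : B.Nonempty) (hAB : Disjoint A B)
    (hUnion : A ∪ B = G.neighborSet x) :
    G.Colorable 3 ↔
      (SimpleGraph.fromRel (fun u v : {v : V // v ≠ x} ⊕ Fin 4 =>
        match u, v with
        | Sum.inl a, Sum.inl b => G.Adj a.1 b.1
        | Sum.inl a, Sum.inr i => (i = 0 ∧ a.1 ∈ A) ∨ (i = 3 ∧ a.1 ∈ B)
        | Sum.inr i, Sum.inr j =>
            (i, j) ∈ ({(0, 1), (0, 2), (1, 2), (1, 3), (2, 3)} : Set (Fin 4 × Fin 4))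
        | _, _ => False)).Colorable 3 := by
  constructor
  · rintro ⟨c⟩
    refine ⟨Coloring.mk (fun u => match u with
      | Sum.inl a => c a.1
      | Sum.inr i => c x + ![0, 1, 2, 0] i) ?_⟩
    intro u v huv
    rw [fromRel_adj] at huv
    obtain ⟨hne, h⟩ := huv
    have hadj : ∀ a : V, a ∈ A ∪ B → c a ≠ c x := by
      intro a ha
      have : G.Adj x a := by rw [hUnion] at ha; exact ha
      exact fun e => (c.valid this) e.symm
    rcases u with a | i <;> rcases v with b | j
    · rcases h with h | h
      · exact c.valid h
      · exact (c.valid h).symm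
    · rcases h with (⟨hi, ha⟩ | ⟨hi, ha⟩) | h
      · subst hi; simpa using hadj a.1 (Or.inl ha)
      · subst hi; simpa using hadj a.1 (Or.inr ha)
      · exact absurd h not_false
    · rcases h with h | (⟨hi, ha⟩ | ⟨hi, ha⟩)
      · exact absurd h not_false
      · subst hi; simpa using fun e => hadj b.1 (Or.inl ha) e.symm
      · subst hi; simpa using fun e => hadj b.1 (Or.inr ha) e.symm
    · simp only [Set.mem_insert_iff, Set.mem_singleton_iff, Prod.mk.injEq] at h
      generalize c x = a
      rcases h with (⟨hi, hj⟩|⟨hi, hj⟩|⟨hi, hj⟩|⟨hi, hj⟩|⟨hi, hj⟩)|(⟨hi, hj⟩|⟨hi, hj⟩|⟨hi, hj⟩|⟨hi, hj⟩|⟨hi, hj⟩) <;>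
        subst hi <;> subst hj <;> simp <;> revert a <;> decide
  · rintro ⟨c⟩
    classical
    have hij : ∀ i j : Fin 4, i ≠ j →
        (i, j) ∈ ({(0, 1), (0, 2), (1, 2), (1, 3), (2, 3)} : Set (Fin 4 × Fin 4)) →
        c (Sum.inr i) ≠ c (Sum.inr j) := by
      intro i j hne hmem
      refine c.valid ?_
      rw [fromRel_adj]
      exact ⟨by simpa using hne, Or.inl hmem⟩
    have key : c (Sum.inr 3) = c (Sum.inr 0) :=
      fin3_aux _ _ _ _ (hij 0 1 (by decide) (by simp)) (hij 0 2 (by decide) (by simp))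
        (hij 1 2 (by decide) (by simp)) (hij 1 3 (by decide) (by simp))
        (hij 2 3 (by decide) (by simp))
    have hmemadj : ∀ v : V, G.Adj x v → v ∈ A ∪ B := by
      intro v hv; rw [hUnion]; exact hv
    have hxA : ∀ (v : V) (hv : v ≠ x), v ∈ A → c (Sum.inr 0) ≠ c (Sum.inl ⟨v, hv⟩) := by
      intro v hv hm
      exact fun e => c.valid (by
        rw [fromRel_adj]
        exact ⟨by simp, Or.inl (Or.inl ⟨rfl, hm⟩)⟩) e.symm
    have hxB : ∀ (v : V) (hv : v ≠ x), v ∈ B → c (Sum.inr 0) ≠ c (Sum.inl ⟨v, hv⟩) := by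
      intro v hv hm
      rw [← key]
      exact fun e => c.valid (by
        rw [fromRel_adj]
        exact ⟨by simp, Or.inl (Or.inr ⟨rfl, hm⟩)⟩) e.symm
    have hx : ∀ (v : V) (hv : v ≠ x), G.Adj x v → c (Sum.inr 0) ≠ c (Sum.inl ⟨v, hv⟩) := by
      intro v hv hadj
      rcases hmemadj v hadj with hm | hm
      · exact hxA v hv hm
      · exact hxB v hv hm
    refine ⟨Coloring.mk (fun v => if h : v = x then c (Sum.inr 0) else c (Sum.inl ⟨v, h⟩)) ?_⟩
    intro u v huv
    by_cases hu : u = x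
    · have hv : v ≠ x := by rintro rfl; exact G.irrefl (hu ▸ huv)
      beta_reduce; rw [dif_pos hu, dif_neg hv]
      exact hx v hv (hu ▸ huv)
    · by_cases hv : v = x
      · beta_reduce; rw [dif_neg hu, dif_pos hv]
        exact fun e => hx u hu (hv ▸ huv.symm) e.symm
      · beta_reduce; rw [dif_neg hu, dif_neg hv]
        refine c.valid ?_
        rw [fromRel_adj]
        refine ⟨?_, Or.inl huv⟩
        simp only [ne_eq, Sum.inl.injEq, Subtype.mk.injEq]
        exact huv.ne
end

section
/- Let G be a connected graph containing no induced subgraph isomorphic to K_{1,3} and no induced subgraph isomorphic to P_5 (the path on 5 vertices). If C is an induced cycle of G of length at least 4, then every vertex of G either lies on C or is adjacent to some vertex of C (i.e., C dominates G). -/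
/-!
Call a vertex dominated if it lies on `C` or has a neighbour on `C`. As `G` is connected, it
suffices that every neighbour `a` of a dominated vertex `b` is dominated. If not, `b` lies off `C`
and has a neighbour `cᵢ` on `C`. Since `|C| ≥ 4`, `cᵢ₋₁` and `cᵢ₊₁` are non-adjacent, so
claw-freeness at `cᵢ` gives `b` two consecutive neighbours `cⱼ, cⱼ₊₁` on `C`. Claw-freeness at `b`,
with `a` as a leaf, forbids `b ~ cⱼ₊₂` and `b ~ cⱼ₊₃`, and then `a b cⱼ₊₁ cⱼ₊₂ cⱼ₊₃` is an
induced `P₅`.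
-/

open SimpleGraph Set

theorem Fin.add_two_ne_self {n : ℕ} (i : Fin (n + 3)) : i + 2 ≠ i := by
  simp [Fin.ext_iff, Nat.mod_eq_of_lt]

namespace SimpleGraph

variable {V : Type*} {G : SimpleGraph V}

theorem claw_isIndContained {x a b c : V}
    (hxa : G.Adj x a) (hxb : G.Adj x b) (hxc : G.Adj x c)
    (hab : a ≠ b) (hac : a ≠ c) (hbc : b ≠ c)
    (nab : ¬ G.Adj a b) (nac : ¬ G.Adj a c) (nbc : ¬ G.Adj b c) :
    completeBipartiteGraph (Fin 1) (Fin 3) ⊴ G := by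
  have := hxa.ne; have := hxb.ne; have := hxc.ne
  let g : Fin 1 ⊕ Fin 3 → V := Sum.elim (fun _ => x) ![a, b, c]
  refine ⟨⟨⟨g, ?_⟩, fun {i j} => (?_ : G.Adj (g i) (g j) ↔ _)⟩⟩
  · rintro (i | i) (j | j) h <;> fin_cases i <;> fin_cases j <;> simp_all [g, eq_comm]
  · rcases i with i | i <;> rcases j with j | j <;> fin_cases i <;> fin_cases j <;>
      simp_all [g, adj_comm]

theorem pathGraph_five_isIndContained {v₀ v₁ v₂ v₃ v₄ : V}
    (h₀₁ : G.Adj v₀ v₁) (h₁₂ : G.Adj v₁ v₂) (h₂₃ : G.Adj v₂ v₃) (h₃₄ : G.Adj v₃ v₄)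
    (n₀₂ : ¬ G.Adj v₀ v₂) (n₀₃ : ¬ G.Adj v₀ v₃) (n₀₄ : ¬ G.Adj v₀ v₄)
    (n₁₃ : ¬ G.Adj v₁ v₃) (n₁₄ : ¬ G.Adj v₁ v₄) (n₂₄ : ¬ G.Adj v₂ v₄)
    (d₀₂ : v₀ ≠ v₂) (d₀₃ : v₀ ≠ v₃) (d₀₄ : v₀ ≠ v₄)
    (d₁₃ : v₁ ≠ v₃) (d₁₄ : v₁ ≠ v₄) (d₂₄ : v₂ ≠ v₄) :
    pathGraph 5 ⊴ G := by
  have := h₀₁.ne; have := h₁₂.ne; have := h₂₃.ne; have := h₃₄.ne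
  let g : Fin 5 → V := ![v₀, v₁, v₂, v₃, v₄]
  refine ⟨⟨⟨g, ?_⟩, fun {i j} => (?_ : G.Adj (g i) (g j) ↔ _)⟩⟩
  · intro i j h
    fin_cases i <;> fin_cases j <;> simp_all [g, eq_comm]
  · fin_cases i <;> fin_cases j <;> simp_all [g, adj_comm, pathGraph_adj]

theorem cycleGraph_adj_add_one {n : ℕ} (i : Fin (n + 2)) : (cycleGraph (n + 2)).Adj i (i + 1) := by
  simp [cycleGraph_adj]

theorem cycleGraph_not_adj_add_two {n : ℕ} (i : Fin (n + 4)) :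
    ¬ (cycleGraph (n + 4)).Adj i (i + 2) := by
  simp [cycleGraph_adj, Fin.ext_iff, Fin.val_neg', Nat.mod_eq_of_lt]

theorem Preconnected.forall_of_forall_adj {P : V → Prop} (hG : G.Preconnected)
    (hP : ∀ ⦃u v⦄, G.Adj u v → P v → P u) {w : V} (hw : P w) (v : V) : P v := by
  obtain ⟨p⟩ := hG v w
  induction p with
  | nil => exact hw
  | cons h _ ih => exact hP h (ih hw)

def IsDominatedBy (G : SimpleGraph V) (S : Set V) (v : V) : Prop :=
  v ∈ S ∨ ∃ u ∈ S, G.Adj v u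

theorem not_isDominatedBy_range_iff {W : Type*} {f : W → V} {v : V} :
    ¬ G.IsDominatedBy (range f) v ↔ (∀ i, f i ≠ v) ∧ ∀ i, ¬ G.Adj v (f i) := by
  simp [IsDominatedBy]

end SimpleGraph

namespace SimpleGraph.Embedding

variable {V : Type*} {G : SimpleGraph V} {m : ℕ} (f : cycleGraph (m + 4) ↪g G)

theorem not_adj_add_two (hclaw : ¬ completeBipartiteGraph (Fin 1) (Fin 3) ⊴ G) {a b : V}
    (hab : G.Adj a b) (ha : ¬ G.IsDominatedBy (range f) a) {j : Fin (m + 4)}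
    (hj : G.Adj b (f j)) : ¬ G.Adj b (f (j + 2)) := by
  obtain ⟨ha_ne, ha_nadj⟩ := not_isDominatedBy_range_iff.1 ha
  intro hj₂
  exact hclaw <| claw_isIndContained hab.symm hj hj₂ (ha_ne j).symm (ha_ne _).symm
    (f.injective.ne (Fin.add_two_ne_self j).symm) (ha_nadj j) (ha_nadj _)
    (f.map_adj_iff.not.2 (cycleGraph_not_adj_add_two j))

theorem adj_or_adj_of_adj_add_one (hclaw : ¬ completeBipartiteGraph (Fin 1) (Fin 3) ⊴ G)
    {b : V} (hb : b ∉ range f) {j : Fin (m + 4)} (hj₁ : G.Adj b (f (j + 1))) :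
    G.Adj b (f j) ∨ G.Adj b (f (j + 2)) := by
  by_contra! ⟨hj, hj₂⟩
  have h₁₂ : G.Adj (f (j + 1)) (f (j + 2)) :=
    (show j + 1 + 1 = j + 2 by abel) ▸ f.map_adj_iff.2 (cycleGraph_adj_add_one (j + 1))
  exact hclaw <| claw_isIndContained hj₁.symm (f.map_adj_iff.2 (cycleGraph_adj_add_one j)).symm
    h₁₂ (fun h => hb ⟨j, h.symm⟩) (fun h => hb ⟨_, h.symm⟩)
    (f.injective.ne (Fin.add_two_ne_self j).symm) hj hj₂
    (f.map_adj_iff.not.2 (cycleGraph_not_adj_add_two j))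

theorem not_adj_add_one (hclaw : ¬ completeBipartiteGraph (Fin 1) (Fin 3) ⊴ G)
    (hP5 : ¬ pathGraph 5 ⊴ G) {a b : V} (hab : G.Adj a b) (ha : ¬ G.IsDominatedBy (range f) a)
    {j : Fin (m + 4)} (hj : G.Adj b (f j)) : ¬ G.Adj b (f (j + 1)) := by
  obtain ⟨ha_ne, ha_nadj⟩ := not_isDominatedBy_range_iff.1 ha
  have hb : ∀ i, f i ≠ b := fun i h => ha_nadj i (h ▸ hab)
  have e₂ : j + 1 + 1 = j + 2 := by abel
  have e₃ : j + 1 + 2 = j + 3 := by abel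
  have e₄ : j + 2 + 1 = j + 3 := by abel
  intro hj₁
  have hj₂ : ¬ G.Adj b (f (j + 2)) := f.not_adj_add_two hclaw hab ha hj
  have hj₃ : ¬ G.Adj b (f (j + 3)) := e₃ ▸ f.not_adj_add_two hclaw hab ha hj₁
  refine hP5 <| pathGraph_five_isIndContained hab hj₁ ?_ ?_ (ha_nadj _) (ha_nadj _) (ha_nadj _)
    hj₂ hj₃ ?_ (ha_ne _).symm (ha_ne _).symm (ha_ne _).symm (hb _).symm (hb _).symm ?_
  · exact e₂ ▸ f.map_adj_iff.2 (cycleGraph_adj_add_one (j + 1))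
  · exact e₄ ▸ f.map_adj_iff.2 (cycleGraph_adj_add_one (j + 2))
  · exact e₃ ▸ f.map_adj_iff.not.2 (cycleGraph_not_adj_add_two (j + 1))
  · exact e₃ ▸ f.injective.ne (Fin.add_two_ne_self (j + 1)).symm

theorem isDominatedBy_range_of_adj (hclaw : ¬ completeBipartiteGraph (Fin 1) (Fin 3) ⊴ G)
    (hP5 : ¬ pathGraph 5 ⊴ G) ⦃a b : V⦄ (hab : G.Adj a b)
    (hb : G.IsDominatedBy (range f) b) : G.IsDominatedBy (range f) a := by
  by_contra ha
  have hb_off : b ∉ range f := fun hb_on => ha (.inr ⟨b, hb_on, hab⟩)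
  obtain ⟨_, ⟨i, rfl⟩, hbi⟩ := hb.resolve_left hb_off
  obtain ⟨j, rfl⟩ : ∃ j, i = j + 1 := ⟨i - 1, (sub_add_cancel i 1).symm⟩
  rcases f.adj_or_adj_of_adj_add_one hclaw hb_off hbi with h | h
  · exact f.not_adj_add_one hclaw hP5 hab ha h hbi
  · exact f.not_adj_add_one hclaw hP5 hab ha hbi (by rwa [show j + 1 + 1 = j + 2 by abel])

end SimpleGraph.Embedding

/-- In a connected `{K_{1,3}, P_5}`-free graph, every induced cycle of length at
least 4 dominates the whole graph. -/
theorem induced_cycle_dominates {V : Type*} (G : SimpleGraph V) (hconn : G.Connected)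
    (hclaw : ¬ Nonempty (completeBipartiteGraph (Fin 1) (Fin 3) ↪g G))
    (hP5 : ¬ Nonempty (pathGraph 5 ↪g G))
    (n : ℕ) (hn : 4 ≤ n) (f : cycleGraph n ↪g G) :
    ∀ v : V, v ∈ Set.range f ∨ ∃ u ∈ Set.range f, G.Adj v u := by
  obtain ⟨m, rfl⟩ : ∃ m, n = m + 4 := ⟨n - 4, by omega⟩
  exact hconn.preconnected.forall_of_forall_adj (P := G.IsDominatedBy (range f))
    (f.isDominatedBy_range_of_adj hclaw hP5) (.inl ⟨0, rfl⟩)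
end

section
/- Let G be a connected graph containing no induced K_{1,3} and no induced hammer (the hammer is the graph on vertices x1,...,x5 with edges (x1,x2),(x1,x3),(x2,x3),(x1,x4),(x4,x5), i.e., a triangle with a pendant path of length 2). If G contains an induced cycle C_n with n >= 7, then G is isomorphic to C_n. -/
open SimpleGraph

/-- The hammer: a triangle `0,1,2` with a pendant path `0 - 3 - 4`. -/
def hammer : SimpleGraph (Fin 5) :=
  SimpleGraph.fromEdgeSet {s(0, 1), s(0, 2), s(1, 2), s(0, 3), s(3, 4)}

/-! Let `w` be a vertex outside the induced cycle `C` with a neighbour `u` on `C`. Claw-freeness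
at `u` yields a cycle edge `uv` with both ends adjacent to `w`. As `n ≥ 7`, `uv` is the middle edge
of an induced path `v₀ v₁ v₂ v₃ v₄ v₅` of `C`. The triangle `w v₂ v₃` with the tails `v₁ v₀` and
`v₄ v₅` would be a hammer unless `w` sees one of `v₀, v₁` and one of `v₄, v₅`, and each of these
four cases produces a claw centred at `w` or a hammer. Hence no edge leaves `C`, and by
connectedness `C` is all of `G`. -/

namespace SimpleGraph

variable {V : Type*} {G : SimpleGraph V}

def clawEmbedding {v a b c : V} (ha : G.Adj v a) (hb : G.Adj v b) (hc : G.Adj v c)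
    (hab : Gᶜ.Adj a b) (hac : Gᶜ.Adj a c) (hbc : Gᶜ.Adj b c) :
    completeBipartiteGraph (Fin 1) (Fin 3) ↪g G where
  toFun := Sum.elim (fun _ => v) ![a, b, c]
  inj' := by
    rw [compl_adj] at hab hac hbc
    rintro (x | x) (y | y) h <;> fin_cases x <;> fin_cases y <;> simp_all
  map_rel_iff' := by
    intro x y
    show G.Adj (Sum.elim _ ![a, b, c] x) (Sum.elim _ ![a, b, c] y) ↔ _
    rw [compl_adj] at hab hac hbc
    rcases x with x | x <;> rcases y with y | y <;> fin_cases x <;> fin_cases y <;>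
      simp_all [adj_comm]

def hammerEmbedding {x₁ x₂ x₃ x₄ x₅ : V}
    (h₁₂ : G.Adj x₁ x₂) (h₁₃ : G.Adj x₁ x₃) (h₂₃ : G.Adj x₂ x₃) (h₁₄ : G.Adj x₁ x₄)
    (h₄₅ : G.Adj x₄ x₅) (h₂₄ : Gᶜ.Adj x₂ x₄) (h₃₄ : Gᶜ.Adj x₃ x₄) (h₁₅ : Gᶜ.Adj x₁ x₅)
    (h₂₅ : Gᶜ.Adj x₂ x₅) (h₃₅ : Gᶜ.Adj x₃ x₅) :
    hammer ↪g G where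
  toFun := ![x₁, x₂, x₃, x₄, x₅]
  inj' := by
    rw [compl_adj] at h₂₄ h₃₄ h₁₅ h₂₅ h₃₅
    intro x y h
    fin_cases x <;> fin_cases y <;> simp_all
  map_rel_iff' := by
    intro x y
    show G.Adj (![x₁, x₂, x₃, x₄, x₅] x) (![x₁, x₂, x₃, x₄, x₅] y) ↔ _
    rw [compl_adj] at h₂₄ h₃₄ h₁₅ h₂₅ h₃₅
    fin_cases x <;> fin_cases y <;> simp_all [hammer, adj_comm]

theorem adj_or_adj_of_clawFree
    (hclaw : ¬ Nonempty (completeBipartiteGraph (Fin 1) (Fin 3) ↪g G))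
    {v a b w : V} (ha : G.Adj v a) (hb : G.Adj v b) (hab : Gᶜ.Adj a b) (hw : G.Adj v w)
    (hwa : w ≠ a) (hwb : w ≠ b) : G.Adj w a ∨ G.Adj w b := by
  by_contra! h
  exact hclaw ⟨clawEmbedding ha hb hw hab ((compl_adj G _ _).2 ⟨hwa.symm, fun e => h.1 e.symm⟩)
    ((compl_adj G _ _).2 ⟨hwb.symm, fun e => h.2 e.symm⟩)⟩

theorem Embedding.adj_of_pathGraph {m : ℕ} (p : pathGraph m ↪g G) {a b : Fin m}
    (h : a.val + 1 = b.val ∨ b.val + 1 = a.val) : G.Adj (p a) (p b) :=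
  p.map_adj_iff.2 (pathGraph_adj.2 h)

theorem Embedding.compl_adj_of_pathGraph {m : ℕ} (p : pathGraph m ↪g G) {a b : Fin m}
    (h : a.val + 1 < b.val ∨ b.val + 1 < a.val) : Gᶜ.Adj (p a) (p b) := by
  rw [compl_adj, p.map_adj_iff, pathGraph_adj, Ne, p.injective.eq_iff, Fin.ext_iff]
  omega

theorem not_adj_two_and_three_of_pathGraph_embedding
    (hclaw : ¬ Nonempty (completeBipartiteGraph (Fin 1) (Fin 3) ↪g G))
    (hham : ¬ Nonempty (hammer ↪g G)) (p : pathGraph 6 ↪g G) {w : V} (hw : w ∉ Set.range p) :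
    ¬ (G.Adj w (p 2) ∧ G.Adj w (p 3)) := by
  rintro ⟨h₂, h₃⟩
  have hadj (a b : Fin 6) (h : a.val + 1 = b.val ∨ b.val + 1 = a.val) : G.Adj (p a) (p b) :=
    p.adj_of_pathGraph h
  have hfar (a b : Fin 6) (h : a.val + 1 < b.val ∨ b.val + 1 < a.val) : Gᶜ.Adj (p a) (p b) :=
    p.compl_adj_of_pathGraph h
  have hout (a : Fin 6) (h : ¬ G.Adj w (p a)) : Gᶜ.Adj w (p a) :=
    (compl_adj G _ _).2 ⟨fun e => hw ⟨a, e.symm⟩, h⟩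
  have claw (a b c : Fin 6) (hab : a.val + 1 < b.val) (hbc : b.val + 1 < c.val)
      (ha : G.Adj w (p a)) (hb : G.Adj w (p b)) (hc : G.Adj w (p c)) : False :=
    hclaw ⟨clawEmbedding ha hb hc (hfar a b (by omega)) (hfar a c (by omega))
      (hfar b c (by omega))⟩
  have h₁₀ : G.Adj w (p 1) ∨ G.Adj w (p 0) := by
    by_contra! h
    exact hham ⟨hammerEmbedding (hadj 2 3 (by decide)) h₂.symm h₃.symm (hadj 2 1 (by decide))
      (hadj 1 0 (by decide)) (hfar 3 1 (by decide)) (hout 1 h.1) (hfar 2 0 (by decide))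
      (hfar 3 0 (by decide)) (hout 0 h.2)⟩
  have h₄₅ : G.Adj w (p 4) ∨ G.Adj w (p 5) := by
    by_contra! h
    exact hham ⟨hammerEmbedding (hadj 3 2 (by decide)) h₃.symm h₂.symm (hadj 3 4 (by decide))
      (hadj 4 5 (by decide)) (hfar 2 4 (by decide)) (hout 4 h.1) (hfar 3 5 (by decide))
      (hfar 2 5 (by decide)) (hout 5 h.2)⟩
  rcases h₁₀ with h₁ | h₀ <;> rcases h₄₅ with h₄ | h₅
  · by_cases h₅ : G.Adj w (p 5)
    · exact claw 1 3 5 (by decide) (by decide) h₁ h₃ h₅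
    exact hham ⟨hammerEmbedding h₁ h₂ (hadj 1 2 (by decide)) h₄ (hadj 4 5 (by decide))
      (hfar 1 4 (by decide)) (hfar 2 4 (by decide)) (hout 5 h₅) (hfar 1 5 (by decide))
      (hfar 2 5 (by decide))⟩
  · exact claw 1 3 5 (by decide) (by decide) h₁ h₃ h₅
  · exact claw 0 2 4 (by decide) (by decide) h₀ h₂ h₄
  · exact claw 0 3 5 (by decide) (by decide) h₀ h₃ h₅

def cycleGraph.pathGraphEmbedding {m n : ℕ} (h : m < n) : pathGraph m ↪g cycleGraph n where
  toEmbedding := Fin.castLEEmb h.le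
  map_rel_iff' {a b} := by
    have hsub (x y : Fin m) :
        (Fin.castLE h.le x - Fin.castLE h.le y).val = 1 ↔ x.val = y.val + 1 := by
      rcases le_or_gt y.val x.val with hxy | hxy
      · rw [Fin.sub_val_of_le (show Fin.castLE h.le y ≤ Fin.castLE h.le x from hxy)]
        simp only [Fin.val_castLE]
        omega
      · rw [Fin.coe_sub_iff_lt.2 (show Fin.castLE h.le x < Fin.castLE h.le y from hxy)]
        simp only [Fin.val_castLE]
        omega
    rw [Fin.castLEEmb_apply, Fin.castLEEmb_apply, cycleGraph_adj', pathGraph_adj, hsub, hsub]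
    omega

section

variable {n : ℕ} [NeZero n]

def cycleGraph.rotate (c : Fin n) : cycleGraph n ≃g cycleGraph n where
  toEquiv := Equiv.addRight c
  map_rel_iff' := by simp [cycleGraph_adj']

def cycleGraph.reflect (c : Fin n) : cycleGraph n ≃g cycleGraph n where
  toEquiv := Equiv.subLeft c
  map_rel_iff' := by simp [cycleGraph_adj', or_comm]

theorem cycleGraph.exists_pathGraph_embedding (hn : 7 ≤ n) {i j : Fin n}
    (h : (cycleGraph n).Adj i j) : ∃ p : pathGraph 6 ↪g cycleGraph n, p 2 = i ∧ p 3 = j := by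
  let e := cycleGraph.pathGraphEmbedding (show 6 < n by omega)
  have he : (e 3 - e 2).val = 1 := by
    rw [Fin.sub_val_of_le] <;> simp [e, pathGraphEmbedding, Fin.le_def]
  rcases cycleGraph_adj'.1 h with hij | hji
  · refine ⟨(cycleGraph.reflect (i + e 2)).toEmbedding.comp e, by simp [reflect], ?_⟩
    have : e 3 - e 2 = i - j := Fin.ext (he.trans hij.symm)
    calc i + e 2 - e 3 = i - (e 3 - e 2) := by abel
      _ = j := by rw [this, sub_sub_cancel]
  · refine ⟨(cycleGraph.rotate (i - e 2)).toEmbedding.comp e, by simp [rotate], ?_⟩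
    have : e 3 - e 2 = j - i := Fin.ext (he.trans hji.symm)
    calc e 3 + (i - e 2) = e 3 - e 2 + i := by abel
      _ = j := by rw [this, sub_add_cancel]

end

theorem not_adj_of_cycleGraph_embedding
    (hclaw : ¬ Nonempty (completeBipartiteGraph (Fin 1) (Fin 3) ↪g G))
    (hham : ¬ Nonempty (hammer ↪g G)) {n : ℕ} (hn : 7 ≤ n) (f : cycleGraph n ↪g G) {w : V}
    (hw : w ∉ Set.range f) (i : Fin n) : ¬ G.Adj (f i) w := by
  intro hiw
  have : NeZero n := ⟨by omega⟩
  have hwf (p : pathGraph 6 ↪g cycleGraph n) : w ∉ Set.range (f.comp p) :=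
    fun ⟨a, ha⟩ => hw ⟨p a, ha⟩
  obtain ⟨j, hij, hjw⟩ : ∃ j, (cycleGraph n).Adj i j ∧ G.Adj w (f j) := by
    obtain ⟨p, rfl, -⟩ := cycleGraph.exists_pathGraph_embedding hn
      (show (cycleGraph n).Adj i (i + 1) by
        simp [cycleGraph_adj', Nat.mod_eq_of_lt (show 1 < n by omega)])
    have hwp (a : Fin 6) : w ≠ f (p a) := fun h => hwf p ⟨a, h.symm⟩
    rcases adj_or_adj_of_clawFree hclaw ((f.comp p).adj_of_pathGraph (b := 1) (by decide))
      ((f.comp p).adj_of_pathGraph (b := 3) (by decide))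
      ((f.comp p).compl_adj_of_pathGraph (by decide)) hiw (hwp 1) (hwp 3) with h | h
    · exact ⟨p 1, p.adj_of_pathGraph (by decide), h⟩
    · exact ⟨p 3, p.adj_of_pathGraph (by decide), h⟩
  obtain ⟨p, rfl, rfl⟩ := cycleGraph.exists_pathGraph_embedding hn hij
  exact not_adj_two_and_three_of_pathGraph_embedding hclaw hham (f.comp p) (hwf p) ⟨hiw.symm, hjw⟩

theorem Embedding.surjective_of_forall_adj_mem_range {W : Type*} [Nonempty W]
    {H : SimpleGraph W} (f : H ↪g G) (hG : G.Preconnected)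
    (h : ∀ a v, G.Adj (f a) v → v ∈ Set.range f) : Function.Surjective f := by
  intro v
  by_contra hv
  obtain ⟨d, -, ⟨a, ha⟩, hd⟩ := (hG (f (Classical.arbitrary W)) v).some.exists_boundary_dart
    (Set.range f) ⟨_, rfl⟩ hv
  exact hd (h a d.snd (ha ▸ d.adj))

end SimpleGraph

/-- A connected `{K_{1,3}, hammer}`-free graph containing an induced cycle `C_n`
with `n ≥ 7` is isomorphic to `C_n`. -/
theorem claw_hammer_free_long_cycle {V : Type*} (G : SimpleGraph V) (hconn : G.Connected)
    (hclaw : ¬ Nonempty (completeBipartiteGraph (Fin 1) (Fin 3) ↪g G))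
    (hham : ¬ Nonempty (hammer ↪g G))
    (n : ℕ) (hn : 7 ≤ n) (f : cycleGraph n ↪g G) :
    Nonempty (cycleGraph n ≃g G) := by
  have : Nonempty (Fin n) := ⟨⟨0, by omega⟩⟩
  have hsurj : Function.Surjective f :=
    f.surjective_of_forall_adj_mem_range hconn.preconnected fun i w hiw => by
      by_contra hw
      exact not_adj_of_cycleGraph_embedding hclaw hham hn f hw i hiw
  exact ⟨RelIso.ofSurjective f hsurj⟩
end

section
/- Let G be a connected graph with no induced K_{1,3} and no induced hammer, and suppose G contains an induced 6-cycle C. Then the subgraph of G induced on V(G) \ V(C) is a disjoint union of at most three cliques; in particular it contains no independent set of size 4. -/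
/-!
Index the hexagon `C` by `ℤ/6`. For a vertex `v ∉ C` with a neighbour on `C`, claws centred on
`C` and at `v`, together with a hammer whose triangle is `v` and an edge of `C`, force `N(v) ∩ C`
to be `C` minus an antipodal pair `{k, k + 3}`: `v` has one of three types. A claw centred at
`v` shows that a neighbour of `v` outside `C` has the type of `v`, and a claw centred at a
vertex of `C` shows that two vertices of the same type are adjacent. By connectivity every vertex
outside `C` has a type, so the three types split `V \ C` into three cliques, each a union of
components.
-/

open SimpleGraph

theorem Fin.exists_forall_mem_iff_mod_three_ne (N : Finset (Fin 6)) (hN : N.Nonempty)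
    (h_nbr : ∀ i ∈ N, i - 1 ∈ N ∨ i + 1 ∈ N)
    (h_edge : ∀ i ∈ N, i + 1 ∈ N → i + 2 ∈ N ∨ i + 3 ∈ N)
    (h_indep : ∀ i, ¬ (i ∈ N ∧ i + 2 ∈ N ∧ i + 4 ∈ N)) :
    ∃ k : Fin 3, ∀ i : Fin 6, i ∈ N ↔ i.val % 3 ≠ k.val := by
  revert N
  decide

namespace SimpleGraph

variable {V : Type*} {G : SimpleGraph V}

theorem nonempty_claw_embedding {a b c d : V} (hab : G.Adj a b) (hac : G.Adj a c)
    (had : G.Adj a d) (hbc : ¬ G.Adj b c) (hbd : ¬ G.Adj b d) (hcd : ¬ G.Adj c d)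
    (nbc : b ≠ c) (nbd : b ≠ d) (ncd : c ≠ d) :
    Nonempty (completeBipartiteGraph (Fin 1) (Fin 3) ↪g G) := by
  have := G.ne_of_adj hab; have := G.ne_of_adj hac; have := G.ne_of_adj had
  refine ⟨⟨⟨Sum.elim (fun _ => a) ![b, c, d], ?_⟩, fun {x y} => ?_⟩⟩
  · rintro (x | x) (y | y) <;> fin_cases x <;> fin_cases y <;> simp_all [eq_comm]
  · change G.Adj (Sum.elim _ _ x) (Sum.elim _ _ y) ↔ _
    rcases x with x | x <;> rcases y with y | y <;> fin_cases x <;> fin_cases y <;>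
      simp_all [G.adj_comm]

theorem nonempty_hammer_embedding {a b c d e : V} (hab : G.Adj a b) (hac : G.Adj a c)
    (hbc : G.Adj b c) (had : G.Adj a d) (hde : G.Adj d e)
    (hbd : ¬ G.Adj b d) (hbe : ¬ G.Adj b e) (hcd : ¬ G.Adj c d)
    (hce : ¬ G.Adj c e) (hae : ¬ G.Adj a e)
    (nbd : b ≠ d) (nbe : b ≠ e) (ncd : c ≠ d) (nce : c ≠ e) (nae : a ≠ e) :
    Nonempty (hammer ↪g G) := by
  have := G.ne_of_adj hab; have := G.ne_of_adj hac; have := G.ne_of_adj hbc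
  have := G.ne_of_adj had; have := G.ne_of_adj hde
  refine ⟨⟨⟨![a, b, c, d, e], ?_⟩, fun {x y} => ?_⟩⟩
  · intro x y
    fin_cases x <;> fin_cases y <;> simp_all [eq_comm]
  · change G.Adj (![a, b, c, d, e] x) (![a, b, c, d, e] y) ↔ _
    fin_cases x <;> fin_cases y <;> simp_all [hammer, G.adj_comm]

theorem Reachable.of_forall_adj_imp {p : V → Prop} (hp : ∀ ⦃u v⦄, G.Adj u v → p u → p v)
    {u v : V} (huv : G.Reachable u v) (hu : p u) : p v := by
  obtain ⟨w⟩ := huv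
  induction w with
  | nil => exact hu
  | cons h _ ih => exact ih (hp h hu)

/-- `v` is adjacent to exactly those vertices `f i` of the hexagon with `i ∉ {k, k + 3}`. -/
def MissesAntipodalPair (G : SimpleGraph V) (f : Fin 6 → V) (v : V) (k : Fin 3) : Prop :=
  ∀ i : Fin 6, G.Adj v (f i) ↔ i.val % 3 ≠ k.val

section Hexagon

variable (f : cycleGraph 6 ↪g G) {v w : V}
  (hclaw : ¬ Nonempty (completeBipartiteGraph (Fin 1) (Fin 3) ↪g G))

include hclaw in
theorem adj_sub_one_or_adj_add_one (hv : v ∉ Set.range f) {i : Fin 6} (hi : G.Adj v (f i)) :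
    G.Adj v (f (i - 1)) ∨ G.Adj v (f (i + 1)) := by
  have hC : ∀ i : Fin 6, (cycleGraph 6).Adj i (i - 1) ∧ (cycleGraph 6).Adj i (i + 1) ∧
      ¬ (cycleGraph 6).Adj (i - 1) (i + 1) ∧ i - 1 ≠ i + 1 := by decide
  obtain ⟨h₁, h₂, h₃, h₄⟩ := hC i
  by_contra! h
  exact hclaw <| nonempty_claw_embedding (f.map_adj_iff.2 h₁) (f.map_adj_iff.2 h₂) hi.symm
    (mt f.map_adj_iff.1 h₃) (fun h' => h.1 h'.symm) (fun h' => h.2 h'.symm)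
    (f.injective.ne h₄) (fun h' => hv ⟨_, h'⟩) (fun h' => hv ⟨_, h'⟩)

theorem adj_add_two_or_adj_add_three (hham : ¬ Nonempty (hammer ↪g G))
    (hv : v ∉ Set.range f) {i : Fin 6} (hi : G.Adj v (f i)) (hi₁ : G.Adj v (f (i + 1))) :
    G.Adj v (f (i + 2)) ∨ G.Adj v (f (i + 3)) := by
  have hC : ∀ i : Fin 6, (cycleGraph 6).Adj (i + 1) i ∧ (cycleGraph 6).Adj (i + 1) (i + 2) ∧
      (cycleGraph 6).Adj (i + 2) (i + 3) ∧ ¬ (cycleGraph 6).Adj i (i + 2) ∧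
      ¬ (cycleGraph 6).Adj i (i + 3) ∧ ¬ (cycleGraph 6).Adj (i + 1) (i + 3) ∧
      i ≠ i + 2 ∧ i ≠ i + 3 ∧ i + 1 ≠ i + 3 := by decide
  obtain ⟨h₁, h₂, h₃, h₄, h₅, h₆, h₇, h₈, h₉⟩ := hC i
  by_contra! h
  exact hham <| nonempty_hammer_embedding (f.map_adj_iff.2 h₁) hi₁.symm hi.symm
    (f.map_adj_iff.2 h₂) (f.map_adj_iff.2 h₃) (mt f.map_adj_iff.1 h₄) (mt f.map_adj_iff.1 h₅)
    h.1 h.2 (mt f.map_adj_iff.1 h₆) (f.injective.ne h₇) (f.injective.ne h₈)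
    (fun h' => hv ⟨_, h'.symm⟩) (fun h' => hv ⟨_, h'.symm⟩) (f.injective.ne h₉)

include hclaw in
theorem not_adj_add_four {i : Fin 6} (hi : G.Adj v (f i)) (hi₂ : G.Adj v (f (i + 2))) :
    ¬ G.Adj v (f (i + 4)) := by
  have hC : ∀ i : Fin 6, ¬ (cycleGraph 6).Adj i (i + 2) ∧ ¬ (cycleGraph 6).Adj i (i + 4) ∧
      ¬ (cycleGraph 6).Adj (i + 2) (i + 4) ∧ i ≠ i + 2 ∧ i ≠ i + 4 ∧ i + 2 ≠ i + 4 := by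
    decide
  obtain ⟨h₁, h₂, h₃, h₄, h₅, h₆⟩ := hC i
  exact fun hi₄ => hclaw <| nonempty_claw_embedding hi hi₂ hi₄ (mt f.map_adj_iff.1 h₁)
    (mt f.map_adj_iff.1 h₂) (mt f.map_adj_iff.1 h₃) (f.injective.ne h₄) (f.injective.ne h₅)
    (f.injective.ne h₆)

include hclaw in
theorem exists_missesAntipodalPair (hham : ¬ Nonempty (hammer ↪g G)) (hv : v ∉ Set.range f)
    {j : Fin 6} (hj : G.Adj v (f j)) : ∃ k, G.MissesAntipodalPair f v k := by
  classical
  obtain ⟨k, hk⟩ := Fin.exists_forall_mem_iff_mod_three_ne {i | G.Adj v (f i)}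
    ⟨j, by simpa using hj⟩ (by simpa using fun i => adj_sub_one_or_adj_add_one f hclaw hv)
    (by simpa using fun i => adj_add_two_or_adj_add_three f hham hv)
    (by simpa using fun i (hi : G.Adj v (f i)) => not_adj_add_four f hclaw hi)
  exact ⟨k, fun i => by simpa using hk i⟩

include hclaw in
theorem MissesAntipodalPair.of_adj {k : Fin 3} (hham : ¬ Nonempty (hammer ↪g G))
    (hvk : G.MissesAntipodalPair f v k) (hw : w ∉ Set.range f) (hvw : G.Adj v w) :
    G.MissesAntipodalPair f w k := by
  have hC : ∀ i : Fin 6, ¬ (cycleGraph 6).Adj i (i + 3) ∧ i ≠ i + 3 ∧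
      (i + 3).val % 3 = i.val % 3 := by decide
  have hw_adj : ∀ i : Fin 6, i.val % 3 ≠ k.val → G.Adj w (f i) ∨ G.Adj w (f (i + 3)) := by
    intro i hik
    obtain ⟨h₁, h₂, h₃⟩ := hC i
    by_contra! h
    exact hclaw <| nonempty_claw_embedding hvw ((hvk i).2 hik) ((hvk (i + 3)).2 (h₃ ▸ hik))
      h.1 h.2 (mt f.map_adj_iff.1 h₁) (fun h' => hw ⟨_, h'.symm⟩)
      (fun h' => hw ⟨_, h'.symm⟩) (f.injective.ne h₂)
  have hk : ∀ k : Fin 3, ∃ i : Fin 6, i.val % 3 ≠ k.val := by decide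
  obtain ⟨i, hik⟩ := hk k
  obtain ⟨k', hk'⟩ : ∃ k', G.MissesAntipodalPair f w k' := by
    exact (hw_adj i hik).elim (exists_missesAntipodalPair f hclaw hham hw)
      (exists_missesAntipodalPair f hclaw hham hw)
  have hkk' : ∀ k k' : Fin 3, (∀ i : Fin 6, i.val % 3 ≠ k.val →
      i.val % 3 ≠ k'.val ∨ (i + 3).val % 3 ≠ k'.val) → k' = k := by decide
  rwa [← hkk' k k' fun i hik => (hw_adj i hik).imp (hk' i).1 (hk' (i + 3)).1]

include hclaw in
theorem MissesAntipodalPair.adj {k : Fin 3} (hvk : G.MissesAntipodalPair f v k)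
    (hwk : G.MissesAntipodalPair f w k) (hv : v ∉ Set.range f) (hw : w ∉ Set.range f)
    (hvw : v ≠ w) : G.Adj v w := by
  have hC : ∀ k : Fin 3, ∃ i j : Fin 6, (cycleGraph 6).Adj i j ∧ i.val % 3 ≠ k.val ∧
      j.val % 3 = k.val := by decide
  obtain ⟨i, j, hij, hi, hj⟩ := hC k
  by_contra h
  exact hclaw <| nonempty_claw_embedding ((hvk i).2 hi).symm ((hwk i).2 hi).symm
    (f.map_adj_iff.2 hij) h (fun h' => (hvk j).1 h' hj) (fun h' => (hwk j).1 h' hj) hvw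
    (fun h' => hv ⟨_, h'.symm⟩) (fun h' => hw ⟨_, h'.symm⟩)

include hclaw in
theorem Connected.exists_missesAntipodalPair (hconn : G.Connected)
    (hham : ¬ Nonempty (hammer ↪g G)) (hv : v ∉ Set.range f) :
    ∃ k, G.MissesAntipodalPair f v k := by
  refine ((hconn.preconnected (f 0) v).of_forall_adj_imp
    (p := fun u => u ∈ Set.range f ∨ ∃ k, G.MissesAntipodalPair f u k) ?_
    (Or.inl ⟨0, rfl⟩)).resolve_left hv
  rintro u w huw hu
  by_cases hw : w ∈ Set.range f
  · exact .inl hw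
  rcases hu with ⟨i, rfl⟩ | ⟨k, hk⟩
  · exact .inr (SimpleGraph.exists_missesAntipodalPair f hclaw hham hw huw.symm)
  · exact .inr ⟨k, hk.of_adj f hclaw hham hw huw⟩

end Hexagon

end SimpleGraph

/-- If a connected `{K_{1,3}, hammer}`-free graph contains an induced 6-cycle `C`,
then the graph induced outside `C` is a disjoint union of at most three cliques;
in particular it has no independent set of size 4. -/
theorem claw_hammer_free_C6_outside {V : Type*} (G : SimpleGraph V) (hconn : G.Connected)
    (hclaw : ¬ Nonempty (completeBipartiteGraph (Fin 1) (Fin 3) ↪g G))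
    (hham : ¬ Nonempty (hammer ↪g G))
    (f : cycleGraph 6 ↪g G) :
    (∀ u v : ↥(Set.range f)ᶜ, (G.induce (Set.range f)ᶜ).Reachable u v → u ≠ v →
        (G.induce (Set.range f)ᶜ).Adj u v) ∧
      (∃ S₁ S₂ S₃ : Set V, (Set.range f)ᶜ = S₁ ∪ S₂ ∪ S₃ ∧
        G.IsClique S₁ ∧ G.IsClique S₂ ∧ G.IsClique S₃) ∧
      ¬ ∃ a b c d : V, a ∉ Set.range f ∧ b ∉ Set.range f ∧ c ∉ Set.range f ∧
        d ∉ Set.range f ∧ a ≠ b ∧ a ≠ c ∧ a ≠ d ∧ b ≠ c ∧ b ≠ d ∧ c ≠ d ∧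
        ¬ G.Adj a b ∧ ¬ G.Adj a c ∧ ¬ G.Adj a d ∧ ¬ G.Adj b c ∧ ¬ G.Adj b d ∧
        ¬ G.Adj c d := by
  have htype : ∀ v ∉ Set.range f, ∃ k, G.MissesAntipodalPair f v k :=
    fun _ => hconn.exists_missesAntipodalPair f hclaw hham
  let S (k : Fin 3) : Set V := {v | v ∉ Set.range f ∧ G.MissesAntipodalPair f v k}
  have hS (k : Fin 3) : G.IsClique (S k) := fun _ hv _ hw => hv.2.adj f hclaw hw.2 hv.1 hw.1
  refine ⟨fun u v huv hne => ?_, ⟨S 0, S 1, S 2, ?_, hS 0, hS 1, hS 2⟩, ?_⟩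
  · obtain ⟨k, hk⟩ := htype u u.2
    have hvk : G.MissesAntipodalPair f v k := huv.of_forall_adj_imp
      (p := fun x : ↥(Set.range f)ᶜ => G.MissesAntipodalPair f x k)
      (fun _ y hxy hx => hx.of_adj f hclaw hham y.2 hxy) hk
    exact hk.adj f hclaw hvk u.2 v.2 (Subtype.coe_injective.ne hne)
  · ext v
    refine ⟨fun hv => ?_, by rintro ((⟨hv, -⟩ | ⟨hv, -⟩) | ⟨hv, -⟩) <;> exact hv⟩
    obtain ⟨k, hk⟩ := htype v hv
    fin_cases k
    exacts [.inl (.inl ⟨hv, hk⟩), .inl (.inr ⟨hv, hk⟩), .inr ⟨hv, hk⟩]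
  · rintro ⟨a, b, c, d, ha, hb, hc, hd, nab, nac, nad, nbc, nbd, ncd,
      eab, eac, ead, ebc, ebd, ecd⟩
    obtain ⟨ka, hka⟩ := htype a ha
    obtain ⟨kb, hkb⟩ := htype b hb
    obtain ⟨kc, hkc⟩ := htype c hc
    obtain ⟨kd, hkd⟩ := htype d hd
    have pigeonhole : ∀ a b c d : Fin 3, a = b ∨ a = c ∨ a = d ∨ b = c ∨ b = d ∨ c = d := by
      decide
    rcases pigeonhole ka kb kc kd with h | h | h | h | h | h <;> subst h
    exacts [eab (hka.adj f hclaw hkb ha hb nab), eac (hka.adj f hclaw hkc ha hc nac),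
      ead (hka.adj f hclaw hkd ha hd nad), ebc (hkb.adj f hclaw hkc hb hc nbc),
      ebd (hkb.adj f hclaw hkd hb hd nbd), ecd (hkc.adj f hclaw hkd hc hd ncd)]
end

section
/- Let G be a connected graph with no induced P_5 and no induced C_4, containing an induced 5-cycle C. Let V_1 be the set of vertices adjacent to all five vertices of C, and V_2 the set of vertices with exactly three neighbors on C. Then every vertex of V_1 is adjacent to every other vertex of V_1 ∪ V_2 ∪ V(C). -/
/-!
A vertex `v` complete to `C` and any other vertex `u` adjacent to two non-adjacent vertices
`x, y` of `C` must be adjacent, as otherwise `u x v y` is an induced 4-cycle. Every vertex of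
`V₁ ∪ V₂` has two such neighbours on `C`: for `V₂` because the 5-cycle is triangle-free.
-/

open SimpleGraph

namespace SimpleGraph

variable {V W : Type*} {G : SimpleGraph V} {H : SimpleGraph W}

lemma nonempty_cycleGraph_four_embedding {a b c d : V}
    (hab : G.Adj a b) (hbc : G.Adj b c) (hcd : G.Adj c d) (hda : G.Adj d a)
    (hac : ¬ G.Adj a c) (hbd : ¬ G.Adj b d) (hac' : a ≠ c) (hbd' : b ≠ d) :
    Nonempty (cycleGraph 4 ↪g G) := by
  have := hab.ne; have := hbc.ne; have := hcd.ne; have := hda.ne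
  have := hab.ne'; have := hbc.ne'; have := hcd.ne'; have := hda.ne'
  have := hac'.symm; have := hbd'.symm
  have : ¬ G.Adj c a := fun h => hac h.symm
  have : ¬ G.Adj d b := fun h => hbd h.symm
  refine ⟨⟨⟨![a, b, c, d], ?_⟩, ?_⟩⟩
  · intro i j hij
    fin_cases i <;> fin_cases j <;> simp_all
  · intro i j
    change G.Adj (![a, b, c, d] i) (![a, b, c, d] j) ↔ _
    fin_cases i <;> fin_cases j <;>
      simp_all [cycleGraph_adj, hab.symm, hbc.symm, hcd.symm, hda.symm] <;> decide

lemma adj_of_adj_of_adj_of_not_adj (hC4 : ¬ Nonempty (cycleGraph 4 ↪g G)) {u v x y : V}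
    (huv : u ≠ v) (hxy : x ≠ y) (hnxy : ¬ G.Adj x y)
    (hux : G.Adj u x) (huy : G.Adj u y) (hvx : G.Adj v x) (hvy : G.Adj v y) : G.Adj u v := by
  by_contra huv'
  exact hC4 (nonempty_cycleGraph_four_embedding hux hvx.symm hvy huy.symm huv' hnxy huv hxy)

lemma CliqueFree.exists_ne_not_adj_of_ncard_eq {n : ℕ} (hH : H.CliqueFree n) {s : Set W}
    (hs : s.ncard = n) : ∃ x ∈ s, ∃ y ∈ s, x ≠ y ∧ ¬ H.Adj x y := by
  by_contra! hclique
  obtain rfl | hn := n.eq_zero_or_pos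
  · exact hH ∅ (by simp [isNClique_iff])
  have hfin : s.Finite := Set.finite_of_ncard_pos (hs ▸ hn)
  refine hH hfin.toFinset ⟨?_, ?_⟩
  · simpa [IsClique, Set.Pairwise] using hclique
  · rw [← hs, Set.ncard_eq_toFinset_card s hfin]

lemma Embedding.exists_ne_not_adj_of_ncard_eq {n : ℕ} (f : H ↪g G) (hH : H.CliqueFree n)
    {s : Set V} (hsf : s ⊆ Set.range f) (hs : s.ncard = n) :
    ∃ x ∈ s, ∃ y ∈ s, x ≠ y ∧ ¬ G.Adj x y := by
  obtain ⟨t, rfl⟩ := Set.subset_range_iff_exists_image_eq.mp hsf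
  rw [Set.ncard_image_of_injective t f.injective] at hs
  obtain ⟨p, hp, q, hq, hpq, hnpq⟩ := hH.exists_ne_not_adj_of_ncard_eq hs
  exact ⟨f p, ⟨p, hp, rfl⟩, f q, ⟨q, hq, rfl⟩, f.injective.ne hpq, by rwa [f.map_adj_iff]⟩

lemma cycleGraph_five_cliqueFree_three : (cycleGraph 5).CliqueFree 3 := by
  intro s hs
  rw [isNClique_iff, Finset.card_eq_three] at hs
  obtain ⟨hclique, a, b, c, hab, hac, hbc, rfl⟩ := hs
  revert a b c
  decide

end SimpleGraph

theorem P5_C4_free_C5_V1_universal_general {V : Type*} (G : SimpleGraph V)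
    (hC4 : ¬ Nonempty (cycleGraph 4 ↪g G))
    (f : cycleGraph 5 ↪g G)
    (V₁ V₂ : Set V)
    (hV₁ : V₁ = {v | ∀ u ∈ Set.range f, G.Adj v u})
    (hV₂ : V₂ = {v | v ∉ Set.range f ∧ {u | u ∈ Set.range f ∧ G.Adj v u}.ncard = 3}) :
    ∀ v ∈ V₁, ∀ u ∈ V₁ ∪ V₂ ∪ Set.range f, u ≠ v → G.Adj v u := by
  subst hV₁ hV₂
  intro v hv u hu hne
  rcases hu with (hu | ⟨-, hcard⟩) | hu
  · exact adj_of_adj_of_adj_of_not_adj hC4 hne.symm (f.injective.ne (by decide : (0 : Fin 5) ≠ 2))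
      (by rw [f.map_adj_iff]; decide) (hv _ ⟨0, rfl⟩) (hv _ ⟨2, rfl⟩) (hu _ ⟨0, rfl⟩) (hu _ ⟨2, rfl⟩)
  · obtain ⟨x, ⟨hxC, hux⟩, y, ⟨hyC, huy⟩, hxy, hnxy⟩ :=
      f.exists_ne_not_adj_of_ncard_eq cycleGraph_five_cliqueFree_three (fun _ h => h.1) hcard
    exact adj_of_adj_of_adj_of_not_adj hC4 hne.symm hxy hnxy (hv x hxC) (hv y hyC) hux huy
  · exact hv u hu

/-- In a connected `{P_5, C_4}`-free graph with an induced 5-cycle `C`, letting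
`V₁` be the vertices adjacent to all of `C` and `V₂` those with exactly three
neighbors on `C`, every vertex of `V₁` is adjacent to every other vertex of
`V₁ ∪ V₂ ∪ V(C)`. -/
theorem P5_C4_free_C5_V1_universal {V : Type*} (G : SimpleGraph V) (hconn : G.Connected)
    (hP5 : ¬ Nonempty (pathGraph 5 ↪g G))
    (hC4 : ¬ Nonempty (cycleGraph 4 ↪g G))
    (f : cycleGraph 5 ↪g G)
    (V₁ V₂ : Set V)
    (hV₁ : V₁ = {v | ∀ u ∈ Set.range f, G.Adj v u})
    (hV₂ : V₂ = {v | v ∉ Set.range f ∧ {u | u ∈ Set.range f ∧ G.Adj v u}.ncard = 3}) :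
    ∀ v ∈ V₁, ∀ u ∈ V₁ ∪ V₂ ∪ Set.range f, u ≠ v → G.Adj v u :=
  P5_C4_free_C5_V1_universal_general G hC4 f V₁ V₂ hV₁ hV₂
end

section
/- A graph G contains no independent set of size 3 if and only if the complement of G contains no triangle; for such a graph, χ(G) = |V(G)| - ν(complement of G), where ν denotes the maximum matching number. -/
open SimpleGraph

/-- The maximum number of pairwise disjoint edges of `H`. -/
noncomputable def matchingNumber {V : Type*} (H : SimpleGraph V) : ℕ :=
  sSup {k : ℕ | ∃ M : Finset (Sym2 V), M.card = k ∧ (↑M : Set (Sym2 V)) ⊆ H.edgeSet ∧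
    (↑M : Set (Sym2 V)).Pairwise fun e e' => ∀ v : V, ¬ (v ∈ e ∧ v ∈ e')}

/-!
The colour classes of `G` are the cliques of `Gᶜ`; when `Gᶜ` is triangle-free they have at most
two vertices, so a proper colouring of `G` is the same thing as a matching `M` of `Gᶜ` (the
two-vertex classes) together with the unmatched vertices as singleton classes, and it uses
`|V| - |M|` colours. Minimising the number of colours is maximising `|M|`.
-/

open Finset

section

variable {V α β : Type*}

def IsEdgeMatching (H : SimpleGraph V) (M : Finset (Sym2 V)) : Prop :=
  (↑M : Set (Sym2 V)) ⊆ H.edgeSet ∧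
    (↑M : Set (Sym2 V)).Pairwise fun e e' => ∀ v : V, ¬ (v ∈ e ∧ v ∈ e')

section Matching

variable {H : SimpleGraph V} {M : Finset (Sym2 V)}

theorem IsEdgeMatching.card_biUnion_toFinset [DecidableEq V] (hM : IsEdgeMatching H M) :
    #(M.biUnion Sym2.toFinset) = 2 * #M := by
  rw [card_biUnion]
  · rw [sum_congr rfl fun e he => Sym2.card_toFinset_of_not_isDiag e
      (H.not_isDiag_of_mem_edgeSet (hM.1 he)), sum_const, smul_eq_mul, mul_comm]
  · intro e he e' he' hne
    exact disjoint_left.2 fun v hv hv' =>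
      hM.2 he he' hne v ⟨Sym2.mem_toFinset.1 hv, Sym2.mem_toFinset.1 hv'⟩

variable [Fintype V]

theorem bddAbove_matchingSizes (H : SimpleGraph V) :
    BddAbove {k : ℕ | ∃ M : Finset (Sym2 V), #M = k ∧ IsEdgeMatching H M} := by
  classical
  exact ⟨Fintype.card (Sym2 V), fun _ ⟨M, hM, _⟩ => hM ▸ card_le_univ M⟩

theorem IsEdgeMatching.card_le_matchingNumber (hM : IsEdgeMatching H M) :
    #M ≤ matchingNumber H :=
  le_csSup (bddAbove_matchingSizes H) ⟨M, rfl, hM⟩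

theorem exists_isEdgeMatching_card_eq_matchingNumber (H : SimpleGraph V) :
    ∃ M : Finset (Sym2 V), IsEdgeMatching H M ∧ #M = matchingNumber H := by
  obtain ⟨M, hM, hMH⟩ := Nat.sSup_mem (by exact ⟨0, ∅, rfl, by simp [IsEdgeMatching]⟩)
    (bddAbove_matchingSizes H)
  exact ⟨M, hMH, hM⟩

end Matching

section KernelPairs

variable [Fintype α] [DecidableEq α] [DecidableEq β]

def kernelPairs (f : α → β) : Finset (Sym2 α) :=
  {e | ¬ e.IsDiag ∧ (e.map f).IsDiag}

@[simp]
theorem mk_mem_kernelPairs {f : α → β} {a b : α} :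
    s(a, b) ∈ kernelPairs f ↔ a ≠ b ∧ f a = f b := by
  simp [kernelPairs]

theorem card_le_card_image_add_card_kernelPairs (f : α → β) :
    Fintype.card α ≤ #(univ.image f) + #(kernelPairs f) := by
  cases isEmpty_or_nonempty α
  · simp
  -- `r a` is a fixed representative of the fibre of `a`; the points that are not
  -- representatives are paired injectively with their representatives.
  set r : α → α := fun a => Function.invFun f (f a)
  have hfr : ∀ a, f (r a) = f a := fun a => Function.invFun_eq ⟨a, rfl⟩
  have hrr : ∀ a, r (r a) = r a := fun a => congrArg (Function.invFun f) (hfr a)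
  have hrep : #{a | r a = a} ≤ #(univ.image f) := by
    refine card_le_card_of_injOn f (fun a _ => mem_image_of_mem f (mem_univ a)) ?_
    intro a ha b hb hab
    have ha : r a = a := by simpa using ha
    have hb : r b = b := by simpa using hb
    rw [← ha, ← hb]
    exact congrArg (Function.invFun f) hab
  have hnonrep : #{a | r a ≠ a} ≤ #(kernelPairs f) := by
    refine card_le_card_of_injOn (fun a => s(a, r a)) (fun a ha => ?_) fun a ha b hb hab => ?_
    · have ha : r a ≠ a := by simpa using ha
      simpa [hfr] using Ne.symm ha
    · rcases Sym2.eq_iff.1 hab with ⟨h, -⟩ | ⟨h, -⟩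
      · exact h
      · have ha : r a ≠ a := by simpa using ha
        exact absurd (by rw [h, hrr]) ha
  calc Fintype.card α = #{a | r a = a} + #{a | r a ≠ a} :=
        (card_filter_add_card_filter_not _).symm
    _ ≤ #(univ.image f) + #(kernelPairs f) := add_le_add hrep hnonrep

theorem pairwise_disjoint_kernelPairs {f : α → β}
    (hf : ∀ a b c, a ≠ b → a ≠ c → f a = f b → f a = f c → b = c) :
    (↑(kernelPairs f) : Set (Sym2 α)).Pairwise fun e e' => ∀ v, ¬ (v ∈ e ∧ v ∈ e') := by
  rintro e he e' he' hne v ⟨hv, hv'⟩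
  obtain ⟨b, rfl⟩ := Sym2.mem_iff_exists.1 hv
  obtain ⟨c, rfl⟩ := Sym2.mem_iff_exists.1 hv'
  simp only [mem_coe, mk_mem_kernelPairs] at he he'
  exact hne (by rw [hf v b c he.1 he'.1 he.2 he'.2])

end KernelPairs

namespace SimpleGraph

theorem not_exists_indep_triple_iff_cliqueFree_three_compl (G : SimpleGraph V) :
    (¬ ∃ a b c : V, a ≠ b ∧ a ≠ c ∧ b ≠ c ∧ ¬ G.Adj a b ∧ ¬ G.Adj a c ∧ ¬ G.Adj b c) ↔
      Gᶜ.CliqueFree 3 := by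
  classical
  constructor
  · intro h s hs
    obtain ⟨a, b, c, hab, hac, hbc, -⟩ := is3Clique_iff.1 hs
    exact h ⟨a, b, c, hab.1, hac.1, hbc.1, hab.2, hac.2, hbc.2⟩
  · rintro h ⟨a, b, c, hab, hac, hbc, nab, nac, nbc⟩
    exact h {a, b, c} (is3Clique_triple_iff.2 ⟨⟨hab, nab⟩, ⟨hac, nac⟩, ⟨hbc, nbc⟩⟩)

variable [Fintype V] {G : SimpleGraph V}

theorem colorable_card_image [DecidableEq α] {c : V → α} (hc : ∀ ⦃u v⦄, G.Adj u v → c u ≠ c v) :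
    G.Colorable #(univ.image c) := by
  simpa using (Coloring.mk (fun v => (⟨c v, mem_image_of_mem c (mem_univ v)⟩ : univ.image c))
    fun h => by simpa using hc h).colorable

theorem Coloring.isEdgeMatching_kernelPairs [DecidableEq V] [DecidableEq α]
    (hG : Gᶜ.CliqueFree 3) (C : G.Coloring α) : IsEdgeMatching Gᶜ (kernelPairs C) := by
  refine ⟨fun e he => ?_, pairwise_disjoint_kernelPairs fun a b c hab hac hb hc => ?_⟩
  · induction e using Sym2.ind with
    | h a b =>
      rw [mem_coe, mk_mem_kernelPairs] at he
      exact ⟨he.1, fun h => C.valid h he.2⟩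
  · by_contra hbc
    exact hG {a, b, c} (is3Clique_triple_iff.2 ⟨⟨hab, fun h => C.valid h hb⟩,
      ⟨hac, fun h => C.valid h hc⟩, ⟨hbc, fun h => C.valid h (hb.symm.trans hc)⟩⟩)

theorem Colorable.card_le_add_matchingNumber_compl (hG : Gᶜ.CliqueFree 3) {m : ℕ}
    (hm : G.Colorable m) : Fintype.card V ≤ m + matchingNumber Gᶜ := by
  classical
  obtain ⟨C⟩ := hm
  calc Fintype.card V ≤ #(univ.image C) + #(kernelPairs C) :=
        card_le_card_image_add_card_kernelPairs C
    _ ≤ m + matchingNumber Gᶜ :=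
        add_le_add ((card_le_univ _).trans_eq (Fintype.card_fin m))
          (C.isEdgeMatching_kernelPairs hG).card_le_matchingNumber

end SimpleGraph

namespace IsEdgeMatching

variable [Fintype V] {G : SimpleGraph V} {M : Finset (Sym2 V)}

theorem colorable_card_sub (hM : IsEdgeMatching Gᶜ M) :
    G.Colorable (Fintype.card V - #M) := by
  classical
  set covered := M.biUnion Sym2.toFinset
  set c : V → Sym2 V := fun v => if h : ∃ e ∈ M, v ∈ e then h.choose else s(v, v)
  have mem_c : ∀ v, v ∈ c v := fun v => by
    by_cases h : ∃ e ∈ M, v ∈ e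
    · simpa [c, h] using h.choose_spec.2
    · simp [c, h]
  have c_cases : ∀ v, c v ∈ M ∨ (v ∉ covered ∧ c v = s(v, v)) := fun v => by
    by_cases h : ∃ e ∈ M, v ∈ e
    · simpa [c, h] using Or.inl h.choose_spec.1
    · simp_all [c, covered]
  have hc : ∀ ⦃u v⦄, G.Adj u v → c u ≠ c v := by
    intro u v huv hcuv
    have hcu : c u = s(u, v) := (Sym2.mem_and_mem_iff huv.ne).1 ⟨mem_c u, hcuv ▸ mem_c v⟩
    rcases c_cases u with hM' | ⟨-, hdiag⟩
    · have hadj : s(u, v) ∈ Gᶜ.edgeSet := hcu ▸ hM.1 hM'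
      exact hadj.2 huv
    · have hvu : v = u := by simpa using hcu.symm.trans hdiag
      exact huv.ne hvu.symm
  have himage : univ.image c ⊆ M ∪ (univ \ covered).image fun v => s(v, v) := by
    intro e he
    obtain ⟨v, -, rfl⟩ := mem_image.1 he
    rcases c_cases v with h | ⟨hv, h⟩
    · exact mem_union_left _ h
    · exact mem_union_right _ (mem_image.2 ⟨v, by simpa using hv, h.symm⟩)
  have hcard : #(univ.image c) ≤ Fintype.card V - #M := calc
    #(univ.image c) ≤ #(M ∪ (univ \ covered).image fun v => s(v, v)) := card_le_card himage
    _ ≤ #M + #(univ \ covered) := (card_union_le _ _).trans (add_le_add_right card_image_le _)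
    _ = Fintype.card V - #M := by
      have hcovered : #covered ≤ Fintype.card V := card_le_univ covered
      rw [hM.card_biUnion_toFinset] at hcovered
      rw [card_univ_sdiff, hM.card_biUnion_toFinset]
      omega
  exact (colorable_card_image hc).mono hcard

end IsEdgeMatching

end

/-- A graph has no independent set of size 3 iff its complement is
triangle-free, and for such a graph `χ(G) = |V(G)| - ν(Gᶜ)`. -/
theorem chromaticNumber_of_no_independent_triple {V : Type*} [Fintype V]
    (G : SimpleGraph V) :
    ((¬ ∃ a b c : V, a ≠ b ∧ a ≠ c ∧ b ≠ c ∧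
        ¬ G.Adj a b ∧ ¬ G.Adj a c ∧ ¬ G.Adj b c) ↔ Gᶜ.CliqueFree 3) ∧
      (Gᶜ.CliqueFree 3 →
        G.chromaticNumber = (↑(Fintype.card V - matchingNumber Gᶜ) : ℕ∞)) := by
  refine ⟨G.not_exists_indep_triple_iff_cliqueFree_three_compl, fun hG => ?_⟩
  obtain ⟨M, hM, hMcard⟩ := exists_isEdgeMatching_card_eq_matchingNumber Gᶜ
  refine le_antisymm (hMcard ▸ hM.colorable_card_sub.chromaticNumber_le)
    (le_chromaticNumber_iff_colorable.2 fun m hm => ?_)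
  have := hm.card_le_add_matchingNumber_compl hG
  exact_mod_cast (by omega : Fintype.card V - matchingNumber Gᶜ ≤ m)
end

section
/- Let G be a connected graph with no induced K_{1,3} and no induced P_5, and suppose G contains an induced 5-cycle C. Then every vertex of G at distance 1 from C has at least two neighbors on C. -/
open SimpleGraph

/-- In a connected `{K_{1,3}, P_5}`-free graph with an induced 5-cycle `C`,
every vertex off `C` that is adjacent to some vertex of `C` has at least two
neighbors on `C`. -/
theorem claw_P5_free_C5_two_neighbors {V : Type*} (G : SimpleGraph V) (hconn : G.Connected)
    (hclaw : ¬ Nonempty (completeBipartiteGraph (Fin 1) (Fin 3) ↪g G))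
    (hP5 : ¬ Nonempty (pathGraph 5 ↪g G))
    (f : cycleGraph 5 ↪g G) :
    ∀ v : V, v ∉ Set.range f → (∃ u ∈ Set.range f, G.Adj v u) →
      ∃ u w : V, u ≠ w ∧ u ∈ Set.range f ∧ w ∈ Set.range f ∧ G.Adj v u ∧ G.Adj v w := by
  intro v hv ⟨u, hu, hadj⟩
  obtain ⟨j, rfl⟩ := hu
  by_contra hcon
  push_neg at hcon
  have honly : ∀ k : Fin 5, G.Adj v (f k) → k = j := by
    intro k hk
    by_contra hne
    exact (hcon (f k) (f j) (fun h => hne (f.injective h)) ⟨k, rfl⟩ ⟨j, rfl⟩ hk) hadj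
  have hvne : ∀ k : Fin 5, v ≠ f k := fun k h => hv ⟨k, h.symm⟩
  have hfadj : ∀ a b : Fin 5, G.Adj (f a) (f b) ↔ a - b = 1 ∨ b - a = 1 := by
    intro a b; rw [f.map_adj_iff, cycleGraph_adj]
  apply hP5
  refine ⟨⟨⟨fun i => if h : i = 0 then v else f (j + (i.pred h).castSucc), ?_⟩, ?_⟩⟩
  · intro a b hab
    dsimp only at hab
    split_ifs at hab with h1 h2 h2
    · exact h1 ▸ h2 ▸ rfl
    · exact absurd hab (hvne _)
    · exact absurd hab.symm (hvne _)
    · have := f.injective hab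
      have := add_left_cancel this
      have h3 : a.pred h1 = b.pred h2 := Fin.castSucc_injective _ this
      exact Fin.pred_inj.mp h3
  · intro a b
    show G.Adj (if h : a = 0 then v else f (j + (a.pred h).castSucc)) (if h : b = 0 then v else f (j + (b.pred h).castSucc)) ↔ (pathGraph 5).Adj a b
    split_ifs with h1 h2 h2
    · subst h1 h2; simp [pathGraph_adj]
    · rw [pathGraph_adj]
      subst h1
      have hb2 : (b : ℕ) ≠ 0 := fun hh => h2 (Fin.ext hh)
      have hb := b.isLt
      constructor
      · intro hab
        have h5 : j + (b.pred h2).castSucc = j := honly _ hab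
        have h6 : (b.pred h2).castSucc = 0 := by
          have := add_eq_left.mp h5
          exact this
        have h7 := congrArg Fin.val h6
        rw [Fin.coe_castSucc, Fin.coe_pred] at h7
        simp only [Fin.val_zero] at h7 ⊢
        omega
      · intro hab
        have hbv : (b : ℕ) = 1 := by simp only [Fin.val_zero] at hab; omega
        have hb1 : b = 1 := Fin.ext (by simpa using hbv)
        subst hb1
        have h0 : ((1 : Fin 5).pred h2).castSucc = 0 := rfl
        rw [h0, add_zero]
        exact hadj
    · rw [pathGraph_adj]
      subst h2
      rw [G.adj_comm]
      have ha2 : (a : ℕ) ≠ 0 := fun hh => h1 (Fin.ext hh)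
      have ha := a.isLt
      constructor
      · intro hab
        have h5 : j + (a.pred h1).castSucc = j := honly _ hab
        have h6 : (a.pred h1).castSucc = 0 := by
          have := add_eq_left.mp h5
          exact this
        have h7 := congrArg Fin.val h6
        rw [Fin.coe_castSucc, Fin.coe_pred] at h7
        simp only [Fin.val_zero] at h7 ⊢
        omega
      · intro hab
        have hav : (a : ℕ) = 1 := by simp only [Fin.val_zero] at hab; omega
        have ha1 : a = 1 := Fin.ext (by simpa using hav)
        subst ha1
        have h0 : ((1 : Fin 5).pred h1).castSucc = 0 := rfl
        rw [h0, add_zero]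
        exact hadj
    · rw [hfadj, pathGraph_adj]
      have ha := a.isLt
      have hb := b.isLt
      have ha2 : (a : ℕ) ≠ 0 := fun hh => h1 (Fin.ext hh)
      have hb2 : (b : ℕ) ≠ 0 := fun hh => h2 (Fin.ext hh)
      rw [add_sub_add_left_eq_sub, add_sub_add_left_eq_sub]
      constructor
      · rintro (h | h)
        · have := congrArg Fin.val h
          rw [Fin.sub_def] at this
          simp only [Fin.coe_castSucc, Fin.coe_pred, Fin.val_one] at this
          omega
        · have := congrArg Fin.val h
          rw [Fin.sub_def] at this
          simp only [Fin.coe_castSucc, Fin.coe_pred, Fin.val_one] at this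
          omega
      · rintro (h | h)
        · right
          rw [Fin.ext_iff, Fin.sub_def]
          simp only [Fin.coe_castSucc, Fin.coe_pred, Fin.val_one]
          omega
        · left
          rw [Fin.ext_iff, Fin.sub_def]
          simp only [Fin.coe_castSucc, Fin.coe_pred, Fin.val_one]
          omega
end

section
/- Let G be a connected graph with no induced K_{1,3} and no induced hammer containing an induced path P on n ≥ 6 vertices of maximal length among induced paths, and suppose some end of P has a neighbor x outside P. Then x is adjacent to at least two vertices of P. -/
/-! If the only neighbour of `x` on the longest induced path `P` were its end, then `x`
followed by `P` would be a longer induced path. Reversing `P` reduces the other end to this case. -/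

open SimpleGraph

namespace SimpleGraph

variable {V : Type*} {G : SimpleGraph V} {n : ℕ}

def pathGraph.reverse (n : ℕ) : pathGraph n ≃g pathGraph n where
  toEquiv := Fin.revPerm
  map_rel_iff' {i j} := by simp only [Fin.revPerm_apply, pathGraph_adj, Fin.val_rev]; omega

def Embedding.pathCons (f : pathGraph (n + 1) ↪g G) (x : V) (hx : x ∉ Set.range f)
    (hadj : ∀ i, G.Adj x (f i) ↔ i = 0) : pathGraph (n + 2) ↪g G where
  toFun := Fin.cons x f
  inj' := Fin.cons_injective_iff.mpr ⟨hx, f.injective⟩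
  map_rel_iff' {i j} := by
    induction i using Fin.cases <;> induction j using Fin.cases
    all_goals simp only [Function.Embedding.coeFn_mk, Fin.cons_zero, Fin.cons_succ]
    · simp
    · rw [hadj, pathGraph_adj, Fin.ext_iff, Fin.val_succ, Fin.val_zero, Fin.val_zero]; omega
    · rw [G.adj_comm, hadj, pathGraph_adj, Fin.ext_iff, Fin.val_succ, Fin.val_zero, Fin.val_zero]
      omega
    · rw [f.map_adj_iff, pathGraph_adj, pathGraph_adj]; simp

lemma Embedding.exists_two_adj_of_adj_zero (f : pathGraph (n + 1) ↪g G)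
    (hmax : ∀ m, Nonempty (pathGraph m ↪g G) → m ≤ n + 1) {x : V} (hx : x ∉ Set.range f)
    (h0 : G.Adj x (f 0)) :
    ∃ u w, u ≠ w ∧ u ∈ Set.range f ∧ w ∈ Set.range f ∧ G.Adj x u ∧ G.Adj x w := by
  by_contra! hone
  have hadj (i : Fin (n + 1)) : G.Adj x (f i) ↔ i = 0 := by
    refine ⟨fun hi => ?_, fun hi => hi ▸ h0⟩
    by_contra hi0
    exact hone _ _ (f.injective.ne hi0) ⟨i, rfl⟩ ⟨0, rfl⟩ hi h0
  have := hmax _ ⟨Embedding.pathCons f x hx hadj⟩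
  omega

end SimpleGraph

/-- In a connected `{K_{1,3}, hammer}`-free graph, if `P` is a longest induced
path, on `n ≥ 6` vertices, and some end of `P` has a neighbor `x` outside `P`,
then `x` is adjacent to at least two vertices of `P`. -/
theorem claw_hammer_free_longest_path_end {V : Type*} (G : SimpleGraph V)
    (n : ℕ) (hn : 6 ≤ n) (f : pathGraph n ↪g G)
    (hmax : ∀ m : ℕ, Nonempty (pathGraph m ↪g G) → m ≤ n)
    (x : V) (hx : x ∉ Set.range f)
    (hend : G.Adj x (f ⟨0, by omega⟩) ∨ G.Adj x (f ⟨n - 1, by omega⟩)) :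
    ∃ u w : V, u ≠ w ∧ u ∈ Set.range f ∧ w ∈ Set.range f ∧ G.Adj x u ∧ G.Adj x w := by
  obtain ⟨m, rfl⟩ : ∃ m, n = m + 1 := ⟨n - 1, by omega⟩
  have hrev : Set.range (f.comp (pathGraph.reverse _).toEmbedding) = Set.range f := by
    simp [EquivLike.range_comp]
  rcases hend with h | h
  · exact Embedding.exists_two_adj_of_adj_zero f hmax hx h
  · rw [← hrev] at hx ⊢
    exact Embedding.exists_two_adj_of_adj_zero _ hmax hx h
end
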